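/- arXiv:1205.2335 — 2 statements merged into one kernel-verified Lean document; each statement's English description precedes it below -/
import Mathlib

section
/- Let E ⊆ [0,∞) with 0 an accumulation point of E. If E is strongly porous on the right at 0 (p⁺(E,0) = 1), then there exists an almost decreasing sequence τ̃ in E∖{0} converging to 0 such that E is τ̃-strongly porous. -/
open Filter Set Topology ENNReal

/-- λ(E,0,h): the supremum of lengths of open subintervals of (0,h) disjoint from E. -/
noncomputable def lambda0 (E : Set ℝ) (h : ℝ) : ℝ :=
  sSup {l : ℝ | ∃ a b : ℝ, 0 ≤ a ∧ a ≤ b ∧ b ≤ h ∧ Set.Ioo a b ∩ E = ∅ ∧ l = b - a}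

/-- p⁺(E,0): the right porosity of E at 0. -/
noncomputable def porosity (E : Set ℝ) : ℝ :=
  Filter.limsup (fun h => lambda0 E h / h) (nhdsWithin 0 (Set.Ioi 0))

/-- 0 is an accumulation point of E (E ⊆ [0,∞), relative topology of [0,∞)). -/
def AccZero (E : Set ℝ) : Prop := ∀ ε > 0, ∃ x ∈ E, 0 < x ∧ x < ε

/-- (a,b) is a connected component of the exterior of E in [0,∞):
an open interval in [0,∞) disjoint from E, maximal with this property. -/
def IsCompExt (E : Set ℝ) (a b : ℝ) : Prop :=
  0 ≤ a ∧ a < b ∧ Set.Ioo a b ∩ E = ∅ ∧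
  ∀ c d : ℝ, 0 ≤ c → Set.Ioo a b ⊆ Set.Ioo c d → (c, d) ≠ (a, b) → Set.Ioo c d ∩ E ≠ ∅

/-- Membership in Ĩ_E. -/
def memIE (E : Set ℝ) (A : ℕ → ℝ × ℝ) : Prop :=
  (∀ n, 0 < (A n).1) ∧ (∀ n, IsCompExt E (A n).1 (A n).2) ∧
  Filter.Tendsto (fun n => (A n).1) Filter.atTop (nhds 0) ∧
  Filter.Tendsto (fun n => ((A n).2 - (A n).1) / (A n).2) Filter.atTop (nhds 1)

/-- Almost decreasing sequence: eventually nonincreasing. -/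
def AlmostDecr (τ : ℕ → ℝ) : Prop := ∀ᶠ n in Filter.atTop, τ (n + 1) ≤ τ n

/-- Membership in Ẽ₀^d: almost decreasing sequences in E∖{0} tending to 0. -/
def memE0d (E : Set ℝ) (τ : ℕ → ℝ) : Prop :=
  AlmostDecr τ ∧ Filter.Tendsto τ Filter.atTop (nhds 0) ∧ ∀ n, τ n ∈ E \ {0}

/-- Weak equivalence ≍ of sequences: c₁ aₙ ≤ γₙ ≤ c₂ aₙ for large n. -/
def SeqEquiv (a γ : ℕ → ℝ) : Prop :=
  ∃ c₁ c₂ : ℝ, 0 < c₁ ∧ 0 < c₂ ∧ ∀ᶠ n in Filter.atTop, c₁ * a n ≤ γ n ∧ γ n ≤ c₂ * a n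

/-- E is τ̃-strongly porous. -/
def StronglyPorousWrt (E : Set ℝ) (τ : ℕ → ℝ) : Prop :=
  ∃ A : ℕ → ℝ × ℝ, memIE E A ∧ SeqEquiv (fun n => (A n).1) τ

/-- E is completely strongly porous at 0. -/
def CSP (E : Set ℝ) : Prop := ∀ τ : ℕ → ℝ, memE0d E τ → StronglyPorousWrt E τ

/-- Membership in Ĩ_E^d: first coordinates almost decreasing. -/
def memIEd (E : Set ℝ) (A : ℕ → ℝ × ℝ) : Prop := memIE E A ∧ AlmostDecr (fun n => (A n).1)

/-- Membership in Ĩ_E^{sd}: first coordinates eventually strictly decreasing. -/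
def memIEsd (E : Set ℝ) (A : ℕ → ℝ × ℝ) : Prop :=
  memIE E A ∧ ∀ᶠ n in Filter.atTop, (A (n + 1)).1 < (A n).1

/-- The preorder Ã ⪯ L̃. -/
def Prec (A L : ℕ → ℝ × ℝ) : Prop :=
  ∃ N₁ : ℕ, ∃ f : ℕ → ℕ, ∀ n ≥ N₁, (A n).1 = (L (f n)).1

/-- L̃ is universal: every Ã ∈ Ĩ_E^d satisfies Ã ⪯ L̃. -/
def Universal (E : Set ℝ) (L : ℕ → ℝ × ℝ) : Prop :=
  ∀ A : ℕ → ℝ × ℝ, memIEd E A → Prec A L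

/-- M(L̃) = limsup lₙ/mₙ₊₁ (in [0,∞]). -/
noncomputable def Mq (L : ℕ → ℝ × ℝ) : ℝ≥0∞ :=
  Filter.limsup (fun n => ENNReal.ofReal ((L n).1 / (L (n + 1)).2)) Filter.atTop

/-- C(τ̃) = inf over {(aₙ,bₙ)} ∈ Ĩ_E with τₙ ≤ aₙ eventually of limsup aₙ/τₙ. -/
noncomputable def Cseq (E : Set ℝ) (τ : ℕ → ℝ) : ℝ≥0∞ :=
  ⨅ (A : ℕ → ℝ × ℝ) (_ : memIE E A ∧ ∀ᶠ n in Filter.atTop, τ n ≤ (A n).1),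
    Filter.limsup (fun n => ENNReal.ofReal ((A n).1 / τ n)) Filter.atTop

/-- C_E = sup over τ̃ ∈ Ẽ₀^d of C(τ̃). -/
noncomputable def CE (E : Set ℝ) : ℝ≥0∞ := ⨆ (τ : ℕ → ℝ) (_ : memE0d E τ), Cseq E τ

/-- E is uniformly strongly porous at 0. -/
def USP (E : Set ℝ) : Prop :=
  ∃ c : ℝ, 0 < c ∧ ∀ τ : ℕ → ℝ, memE0d E τ → ∃ A : ℕ → ℝ × ℝ, memIE E A ∧
    (∀ᶠ n in Filter.atTop, τ n ≤ (A n).1) ∧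
    Filter.limsup (fun n => ENNReal.ofReal ((A n).1 / τ n)) Filter.atTop ≤ ENNReal.ofReal c


private lemma lambda0_nonneg (E : Set ℝ) {h : ℝ} (hh : 0 ≤ h) : 0 ≤ lambda0 E h := by
  apply le_csSup
  · refine ⟨h, ?_⟩
    rintro l ⟨a, b, ha, hab, hbh, -, rfl⟩
    linarith
  · exact ⟨0, 0, le_refl 0, le_refl 0, hh, by simp, by ring⟩

private lemma gap_exists (E : Set ℝ) (hpor : porosity E = 1) :
    ∀ δ > (0:ℝ), ∀ ε : ℝ, 0 < ε → ε ≤ 1 → ∃ h a b : ℝ, 0 < h ∧ h < δ ∧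
      0 ≤ a ∧ a ≤ b ∧ b ≤ h ∧ Set.Ioo a b ∩ E = ∅ ∧ (1 - ε) * h < b - a := by
  intro δ hδ ε hε0 hε1
  have hfreq : ∃ᶠ h in nhdsWithin 0 (Set.Ioi 0), 1 - ε < lambda0 E h / h := by
    apply frequently_lt_of_lt_limsup
    · apply Filter.IsCoboundedUnder.of_frequently_ge (a := 0)
      apply Filter.Eventually.frequently
      filter_upwards [self_mem_nhdsWithin] with h hh
      exact div_nonneg (lambda0_nonneg E (le_of_lt hh)) (le_of_lt hh)
    · show 1 - ε < porosity E
      rw [hpor]; linarith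
  have hmem : ∀ᶠ h in nhdsWithin 0 (Set.Ioi 0), h ∈ Set.Ioo (0:ℝ) δ :=
    eventually_of_mem (Ioo_mem_nhdsGT_of_mem ⟨le_refl 0, hδ⟩) (fun x hx => hx)
  obtain ⟨h, hlt, hh0, hhδ⟩ := (hfreq.and_eventually hmem).exists
  have hlam : (1 - ε) * h < lambda0 E h := (lt_div_iff₀ hh0).mp hlt
  set S := {l : ℝ | ∃ a b : ℝ, 0 ≤ a ∧ a ≤ b ∧ b ≤ h ∧ Set.Ioo a b ∩ E = ∅ ∧ l = b - a} with hS
  have hSne : S.Nonempty := ⟨0, 0, 0, le_refl 0, le_refl 0, le_of_lt hh0, by simp, by ring⟩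
  have hex : ∃ l ∈ S, (1 - ε) * h < l := by
    by_contra hcon
    push_neg at hcon
    have : lambda0 E h ≤ (1 - ε) * h := csSup_le hSne hcon
    linarith
  obtain ⟨l, ⟨a, b, ha, hab, hbh, hgap, rfl⟩, hl⟩ := hex
  exact ⟨h, a, b, hh0, hhδ, ha, hab, hbh, hgap, hl⟩

private lemma comp_point {E : Set ℝ} {a b : ℝ} (hc : IsCompExt E a b) (ha : 0 < a) :
    ∃ t ∈ E, a / 2 < t ∧ t ≤ a := by
  obtain ⟨ha0, hab, hgap, hmax⟩ := hc
  have hne := hmax (a / 2) b (by linarith) (fun x hx => ⟨by linarith [hx.1], hx.2⟩)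
    (by intro hpd
        have : a / 2 = a := congrArg Prod.fst hpd
        linarith)
  obtain ⟨x, ⟨hx1, hx2⟩, hxE⟩ := Set.nonempty_iff_ne_empty.mpr hne
  refine ⟨x, hxE, hx1, ?_⟩
  by_contra hgt
  push_neg at hgt
  have hmem : x ∈ Set.Ioo a b ∩ E := ⟨⟨hgt, hx2⟩, hxE⟩
  rw [hgap] at hmem
  exact hmem

private lemma comp_exists (E : Set ℝ) (hacc : AccZero E) (hpor : porosity E = 1) :
    ∀ δ > (0:ℝ), ∀ ε > (0:ℝ), ∃ a b : ℝ, IsCompExt E a b ∧ 0 < a ∧ a < δ ∧ a < ε * b := by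
  intro δ hδ ε hε
  obtain ⟨e₀, he₀E, he₀pos, -⟩ := hacc 1 one_pos
  set ε₂ := min (ε / 2) (1 / 2) with hε₂def
  have hε₂0 : 0 < ε₂ := lt_min (by linarith) (by norm_num)
  have hε₂le : ε₂ ≤ ε / 2 := min_le_left _ _
  have hε₂half : ε₂ ≤ 1 / 2 := min_le_right _ _
  obtain ⟨h, a, b, hh0, hhδ, ha0, hab, hbh, hgap, hlen⟩ :=
    gap_exists E hpor (min δ e₀) (lt_min hδ he₀pos) ε₂ hε₂0 (by linarith)
  have hhd : h < δ := lt_of_lt_of_le hhδ (min_le_left _ _)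
  have hhe : h < e₀ := lt_of_lt_of_le hhδ (min_le_right _ _)
  have hba : 0 < b - a := by nlinarith
  have hbpos : 0 < b := by linarith
  have haε : a < ε₂ * h := by nlinarith
  have hb2 : h ≤ 2 * b := by nlinarith
  have hapos : 0 < a := by
    rcases lt_or_ge 0 a with h1 | h1
    · exact h1
    · exfalso
      have ha0' : a = 0 := le_antisymm h1 ha0
      obtain ⟨x, hxE, hx0, hxb⟩ := hacc b hbpos
      have : x ∈ Set.Ioo a b ∩ E := ⟨⟨by rw [ha0']; exact hx0, hxb⟩, hxE⟩
      rw [hgap] at this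
      exact this
  -- the component containing the gap
  set Sa := {x : ℝ | x ∈ E ∧ 0 < x ∧ x ≤ a} with hSa
  obtain ⟨x₀, hx₀E, hx₀0, hx₀a⟩ := hacc a hapos
  have hSane : Sa.Nonempty := ⟨x₀, hx₀E, hx₀0, le_of_lt hx₀a⟩
  have hSabdd : BddAbove Sa := ⟨a, fun x hx => hx.2.2⟩
  set A := sSup Sa with hA
  have hApos : 0 < A := lt_of_lt_of_le hx₀0 (le_csSup hSabdd ⟨hx₀E, hx₀0, le_of_lt hx₀a⟩)
  have hAle : A ≤ a := csSup_le hSane (fun x hx => hx.2.2)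
  set Sb := {x : ℝ | x ∈ E ∧ b ≤ x} with hSb
  have hSbne : Sb.Nonempty := ⟨e₀, he₀E, by linarith⟩
  have hSbbdd : BddBelow Sb := ⟨b, fun x hx => hx.2⟩
  set B := sInf Sb with hB
  have hBge : b ≤ B := le_csInf hSbne (fun x hx => hx.2)
  have hAB : A < B := by linarith
  have hgap' : Set.Ioo A B ∩ E = ∅ := by
    rw [Set.eq_empty_iff_forall_notMem]
    rintro x ⟨⟨hx1, hx2⟩, hxE⟩
    rcases le_or_gt x a with h1 | h1
    · have hmem : x ∈ Sa := ⟨hxE, lt_trans hApos hx1, h1⟩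
      have := le_csSup hSabdd hmem
      linarith
    · rcases lt_or_ge x b with h2 | h2
      · have : x ∈ Set.Ioo a b ∩ E := ⟨⟨h1, h2⟩, hxE⟩
        rw [hgap] at this
        exact this
      · have hmem : x ∈ Sb := ⟨hxE, h2⟩
        have := csInf_le hSbbdd hmem
        linarith
  refine ⟨A, B, ⟨le_of_lt hApos, hAB, hgap', ?_⟩, hApos, by linarith, by nlinarith⟩
  intro c d hc hsub hne
  have hcd := (Set.Ioo_subset_Ioo_iff hAB).mp hsub
  have hor : c < A ∨ B < d := by
    by_contra hcon
    push_neg at hcon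
    exact hne (Prod.ext (le_antisymm hcd.1 hcon.1) (le_antisymm hcon.2 hcd.2))
  rw [← Set.nonempty_iff_ne_empty]
  rcases hor with h1 | h1
  · obtain ⟨x, hxSa, hx⟩ := exists_lt_of_lt_csSup hSane h1
    have hxA : x ≤ A := le_csSup hSabdd hxSa
    exact ⟨x, ⟨hx, by linarith [hcd.2]⟩, hxSa.1⟩
  · obtain ⟨x, hxSb, hx⟩ := exists_lt_of_csInf_lt hSbne h1
    have hxB : B ≤ x := csInf_le hSbbdd hxSb
    exact ⟨x, ⟨by linarith [hcd.1], hx⟩, hxSb.1⟩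

private lemma rec_exists {α : Type*} (P : ℕ → α → Prop) (R : α → α → Prop)
    (h0 : ∃ a, P 0 a) (hs : ∀ n a, P n a → ∃ b, P (n + 1) b ∧ R a b) :
    ∃ f : ℕ → α, (∀ n, P n (f n)) ∧ ∀ n, R (f n) (f (n + 1)) := by
  let F : (n : ℕ) → {a // P n a} := fun n => Nat.rec ⟨h0.choose, h0.choose_spec⟩
    (fun n ih => ⟨(hs n ih.1 ih.2).choose, (hs n ih.1 ih.2).choose_spec.1⟩) n
  refine ⟨fun n => (F n).1, fun n => (F n).2, fun n => ?_⟩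
  exact (hs n (F n).1 (F n).2).choose_spec.2

theorem stmt4 (E : Set ℝ) (hE : E ⊆ Set.Ici 0) (hacc : AccZero E)
    (hpor : porosity E = 1) :
    ∃ τ : ℕ → ℝ, memE0d E τ ∧ StronglyPorousWrt E τ := by
  have key := comp_exists E hacc hpor
  set P : ℕ → ℝ × ℝ → Prop := fun n p =>
    IsCompExt E p.1 p.2 ∧ 0 < p.1 ∧ p.1 < 1 / (n + 1) ∧ p.1 < (1 / (n + 1)) * p.2 with hP
  have h0 : ∃ p : ℝ × ℝ, P 0 p := by
    obtain ⟨a, b, hc, ha, haδ, hab⟩ := key 1 one_pos 1 one_pos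
    exact ⟨(a, b), hc, ha, by norm_num; linarith, by norm_num; linarith⟩
  have hs : ∀ n p, P n p → ∃ q : ℝ × ℝ, P (n + 1) q ∧ q.1 ≤ p.1 / 2 := by
    intro n p hp
    have hpos : (0:ℝ) < 1 / (n + 1 + 1) := by positivity
    obtain ⟨a, b, hc, ha, haδ, hab⟩ :=
      key (min (p.1 / 2) (1 / (n + 1 + 1))) (lt_min (by linarith [hp.2.1]) hpos)
        (1 / (n + 1 + 1)) hpos
    refine ⟨(a, b), ⟨hc, ha, ?_, by push_cast; exact_mod_cast hab⟩, ?_⟩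
    · push_cast
      exact lt_of_lt_of_le haδ (min_le_right _ _)
    · exact le_of_lt (lt_of_lt_of_le haδ (min_le_left _ _))
  obtain ⟨A, hPA, hR⟩ := rec_exists P _ h0 hs
  have hIC : ∀ n, IsCompExt E (A n).1 (A n).2 := fun n => (hPA n).1
  have hApos : ∀ n, 0 < (A n).1 := fun n => (hPA n).2.1
  have hAsmall : ∀ n, (A n).1 < 1 / (n + 1) := fun n => (hPA n).2.2.1
  have hratio : ∀ n, (A n).1 < (1 / (n + 1)) * (A n).2 := fun n => (hPA n).2.2.2
  have hBpos : ∀ n, 0 < (A n).2 := fun n => lt_trans (hApos n) (hIC n).2.1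
  have htau : ∀ n, ∃ t ∈ E, (A n).1 / 2 < t ∧ t ≤ (A n).1 :=
    fun n => comp_point (hIC n) (hApos n)
  choose τ hτE hτ1 hτ2 using htau
  have hAtend : Tendsto (fun n => (A n).1) atTop (nhds 0) := by
    apply squeeze_zero (fun n => le_of_lt (hApos n)) (fun n => le_of_lt (hAsmall n))
    exact tendsto_one_div_add_atTop_nhds_zero_nat
  have hτtend : Tendsto τ atTop (nhds 0) := by
    apply squeeze_zero (fun n => by linarith [hτ1 n, hApos n]) (fun n => hτ2 n) hAtend
  refine ⟨τ, ⟨?_, hτtend, ?_⟩, A, ⟨hApos, hIC, hAtend, ?_⟩, 1/2, 1, by norm_num, one_pos, ?_⟩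
  · apply Filter.Eventually.of_forall
    intro n
    have := hR n
    have := hτ2 (n + 1)
    have := hτ1 n
    linarith
  · intro n
    refine ⟨hτE n, ?_⟩
    simp only [Set.mem_singleton_iff]
    intro h
    have h1 := hτ1 n
    rw [h] at h1
    linarith [hApos n]
  · have hq : Tendsto (fun n => (A n).1 / (A n).2) atTop (nhds 0) := by
      apply squeeze_zero
        (fun n => div_nonneg (le_of_lt (hApos n)) (le_of_lt (hBpos n)))
        (fun n => ?_) tendsto_one_div_add_atTop_nhds_zero_nat
      rw [div_le_iff₀ (hBpos n)]
      calc (A n).1 ≤ (1 / (n + 1)) * (A n).2 := le_of_lt (hratio n)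
        _ = 1 / (↑n + 1) * (A n).2 := by norm_num
    have h1 : Tendsto (fun n => 1 - (A n).1 / (A n).2) atTop (nhds 1) := by
      have := tendsto_const_nhds (x := (1:ℝ)) (f := atTop (α := ℕ)) |>.sub hq
      simpa using this
    apply h1.congr
    intro n
    have hb := ne_of_gt (hBpos n)
    field_simp
  · apply Filter.Eventually.of_forall
    intro n
    constructor
    · have := hτ1 n; linarith
    · have := hτ2 n; linarith
end

section
/- Let E ⊆ [0,∞) be a completely strongly porous set and let L̃ = {(lₙ,mₙ)} ∈ Ĩ_E^{sd} be universal. Then M(L̃) = C_E, where M(L̃) := limsup_{n→∞} lₙ/mₙ₊₁ and C_E is the supremum over almost decreasing sequences τ̃ in E∖{0} converging to 0 of C(τ̃) := inf{limsup_{n→∞} aₙ/τₙ : {(aₙ,bₙ)} ∈ Ĩ_E with τₙ ≤ aₙ eventually}. -/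
/-!
C_E ≤ M(L̃): given τ̃, take k = f(n) with lₖ₊₁ < τₙ ≤ lₖ. Since τₙ ∈ E cannot lie in the
component (lₖ₊₁, mₖ₊₁), we get mₖ₊₁ ≤ τₙ, so the subsequence (L_{f(n)}) is admissible for C(τ̃)
with ratios at most l_{f(n)}/m_{f(n)+1}.

M(L̃) ≤ C_E: E accumulates at the right end of each component, so there are τₙ ∈ E with
τₙ/mₙ₊₁ → 1. By universality the left endpoints of any Ã ∈ Ĩ_E are eventually among the lₖ
(apply it to an antitone subsequence), while no lₖ lies in the gap [mₙ₊₁, lₙ). Hence an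
admissible Ã with aₙ ≥ τₙ ≥ mₙ₊₁ has aₙ ≥ lₙ, and aₙ/τₙ ≥ (lₙ/mₙ₊₁)(mₙ₊₁/τₙ).
-/

open Filter Set Topology ENNReal

namespace IsCompExt

variable {E : Set ℝ} {a b c d : ℝ}

lemma eq_of_subset (h : IsCompExt E a b) (hc : 0 ≤ c) (hsub : Ioo a b ⊆ Ioo c d)
    (hd : Ioo c d ∩ E = ∅) : (c, d) = (a, b) := by
  by_contra hne
  exact h.2.2.2 c d hc hsub hne hd

lemma le_of_mem (h : IsCompExt E a b) {x : ℝ} (hx : x ∈ E) (hax : a < x) : b ≤ x := by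
  by_contra! hxb
  exact (h.2.2.1 ▸ ⟨⟨hax, hxb⟩, hx⟩ : x ∈ (∅ : Set ℝ))

lemma right_le_of_lt (h₁ : IsCompExt E a b) (h₂ : IsCompExt E c d) (hac : a < c) : b ≤ c := by
  by_contra! hcb
  rcases le_or_gt d b with hdb | hbd
  · have := h₂.eq_of_subset h₁.1 (Ioo_subset_Ioo hac.le hdb) h₁.2.2.1
    exact hac.ne (congrArg Prod.fst this)
  · have hempty : Ioo a d ∩ E = ∅ := by
      refine eq_empty_of_forall_notMem fun x ⟨⟨hax, hxd⟩, hxE⟩ => ?_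
      rcases lt_or_ge x b with hxb | hbx
      · exact (h₁.2.2.1 ▸ ⟨⟨hax, hxb⟩, hxE⟩ : x ∈ (∅ : Set ℝ))
      · exact (h₂.2.2.1 ▸ ⟨⟨hcb.trans_le hbx, hxd⟩, hxE⟩ : x ∈ (∅ : Set ℝ))
    have := h₁.eq_of_subset h₁.1 (Ioo_subset_Ioo_right hbd.le) hempty
    exact hbd.ne' (congrArg Prod.snd this)

lemma exists_mem_Ico (h : IsCompExt E a b) {δ : ℝ} (hδ : 0 < δ) :
    ∃ x ∈ E, x ∈ Ico b (b + δ) := by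
  by_contra! hno
  have hempty : Ioo a (b + δ) ∩ E = ∅ :=
    eq_empty_of_forall_notMem fun x ⟨⟨hax, hxb⟩, hxE⟩ =>
      hno x hxE ⟨h.le_of_mem hxE hax, hxb⟩
  have := h.eq_of_subset h.1 (Ioo_subset_Ioo_right (by linarith)) hempty
  linarith [congrArg Prod.snd this]

end IsCompExt

lemma tendsto_atTop_of_tendsto_comp_zero {l : ℕ → ℝ} (hl : ∀ n, 0 < l n) {g : ℕ → ℕ}
    (hg : Tendsto (l ∘ g) atTop (𝓝 0)) : Tendsto g atTop atTop := by
  have hcof : Tendsto g atTop cofinite := le_cofinite_iff_eventually_ne.2 fun k =>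
    (hg.eventually (gt_mem_nhds (hl k))).mono fun n hn hnk => hn.ne (congrArg l hnk)
  rwa [Nat.cofinite_eq_atTop] at hcof

lemma exists_strictMono_antitone_comp_of_frequently {a : ℕ → ℝ} {x : ℝ} (hx : ∀ n, x < a n)
    (ha : Tendsto a atTop (𝓝 x)) {P : ℕ → Prop} (hP : ∃ᶠ n in atTop, P n) :
    ∃ φ : ℕ → ℕ, StrictMono φ ∧ Antitone (a ∘ φ) ∧ ∀ n, P (φ n) := by
  obtain ⟨ψ, hψ, hPψ⟩ := extraction_of_frequently_atTop hP
  obtain ⟨g, hinc | hnoninc⟩ := exists_increasing_or_nonincreasing_subseq (· < ·) (a ∘ ψ)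
  · have hmono : Monotone (a ∘ ψ ∘ g) :=
      monotone_nat_of_le_succ fun n => (hinc n (n + 1) n.lt_succ_self).le
    have hlim : Tendsto (a ∘ ψ ∘ g) atTop (𝓝 x) :=
      ha.comp ((hψ.comp g.strictMono).tendsto_atTop)
    exact absurd (hmono.ge_of_tendsto hlim 0) (hx _).not_ge
  · refine ⟨ψ ∘ g, hψ.comp g.strictMono, antitone_nat_of_succ_le fun n => ?_, fun n => hPψ _⟩
    exact not_lt.1 (hnoninc n (n + 1) n.lt_succ_self)

lemma memIE.comp {E : Set ℝ} {A : ℕ → ℝ × ℝ} (hA : memIE E A) {φ : ℕ → ℕ}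
    (hφ : Tendsto φ atTop atTop) : memIE E (A ∘ φ) :=
  ⟨fun n => hA.1 (φ n), fun n => hA.2.1 (φ n), hA.2.2.1.comp hφ, hA.2.2.2.comp hφ⟩

lemma memIE.snd_pos {E : Set ℝ} {A : ℕ → ℝ × ℝ} (hA : memIE E A) (n : ℕ) : 0 < (A n).2 :=
  (hA.1 n).trans (hA.2.1 n).2.1

lemma memIE.tendsto_fst_div_snd {E : Set ℝ} {A : ℕ → ℝ × ℝ} (hA : memIE E A) :
    Tendsto (fun n => (A n).1 / (A n).2) atTop (𝓝 0) := by
  have h := hA.2.2.2.const_sub 1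
  rw [sub_self] at h
  refine h.congr fun n => ?_
  have := (hA.snd_pos n).ne'
  field_simp
  ring

lemma Universal.eventually_exists_fst_eq {E : Set ℝ} {L A : ℕ → ℝ × ℝ} (hU : Universal E L)
    (hA : memIE E A) : ∀ᶠ n in atTop, ∃ k, (A n).1 = (L k).1 := by
  by_contra h
  obtain ⟨φ, hφ, hanti, hne⟩ :=
    exists_strictMono_antitone_comp_of_frequently hA.1 hA.2.2.1 (not_eventually.1 h)
  obtain ⟨N, f, hf⟩ :=
    hU (A ∘ φ) ⟨hA.comp hφ.tendsto_atTop, Eventually.of_forall fun n => hanti n.le_succ⟩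
  exact hne N ⟨f N, hf N le_rfl⟩

lemma exists_lt_succ_and_le {l : ℕ → ℝ} {t : ℝ} {N : ℕ} (hN : t ≤ l N)
    (h : ∀ᶠ k in atTop, l k < t) : ∃ k, N ≤ k ∧ l (k + 1) < t ∧ t ≤ l k := by
  obtain ⟨k, hk, hNk⟩ := (h.and (eventually_ge_atTop N)).exists
  obtain ⟨j, hj, hj₁⟩ := Nat.exists_not_and_succ_of_not_zero_of_exists
    (p := fun j => l (N + j) < t) (by simpa using hN) ⟨k - N, by rwa [Nat.add_sub_cancel' hNk]⟩
  exact ⟨N + j, Nat.le_add_right N j, hj₁, not_lt.1 hj⟩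

namespace memIEsd

variable {E : Set ℝ} {L : ℕ → ℝ × ℝ}

lemma exists_antitoneOn (hL : memIEsd E L) : ∃ N, AntitoneOn (fun n => (L n).1) (Ici N) := by
  obtain ⟨N, hN⟩ := eventually_atTop.1 hL.2
  refine ⟨N, (strictAntiOn_Ici_of_lt_pred fun m hm => ?_).antitoneOn⟩
  have := hN (m - 1) (by omega)
  rwa [Nat.sub_add_cancel (by omega)] at this

lemma eventually_snd_succ_le (hL : memIEsd E L) : ∀ᶠ n in atTop, (L (n + 1)).2 ≤ (L n).1 :=
  hL.2.mono fun n h => (hL.1.2.1 (n + 1)).right_le_of_lt (hL.1.2.1 n) h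

lemma eventually_forall_fst_notMem_Ico (hL : memIEsd E L) :
    ∀ᶠ n in atTop, ∀ k, (L k).1 ∉ Ico (L (n + 1)).2 (L n).1 := by
  obtain ⟨N, hanti⟩ := hL.exists_antitoneOn
  have hsmall : ∀ᶠ n in atTop, ∀ k ∈ Iio N, (L n).1 < (L k).1 :=
    (finite_Iio N).eventually_all.2 fun k _ => hL.1.2.2.1.eventually (gt_mem_nhds (hL.1.1 k))
  filter_upwards [eventually_ge_atTop N, hsmall] with n hNn hn k ⟨hmk, hkn⟩
  rcases lt_or_ge k N with hkN | hNk
  · exact (hn k hkN).not_ge hkn.le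
  rcases le_or_gt k n with hkn' | hnk
  · exact (hanti hNk hNn hkn').not_gt hkn
  · exact ((hanti (mem_Ici.2 (by omega)) hNk hnk).trans_lt (hL.1.2.1 (n + 1)).2.1).not_ge hmk

lemma eventually_fst_le (hL : memIEsd E L) (hU : Universal E L) {A : ℕ → ℝ × ℝ}
    (hA : memIE E A) (hAm : ∀ᶠ n in atTop, (L (n + 1)).2 ≤ (A n).1) :
    ∀ᶠ n in atTop, (L n).1 ≤ (A n).1 := by
  filter_upwards [hU.eventually_exists_fst_eq hA, hL.eventually_forall_fst_notMem_Ico, hAm]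
    with n ⟨k, hk⟩ hgap hm
  by_contra! hlt
  exact hgap k (hk ▸ ⟨hm, hlt⟩)

end memIEsd

section

variable {E : Set ℝ} {L : ℕ → ℝ × ℝ}

lemma Cseq_le_Mq (hE : E ⊆ Ici 0) (hL : memIEsd E L) {τ : ℕ → ℝ} (hτ : memE0d E τ) :
    Cseq E τ ≤ Mq L := by
  obtain ⟨N, hanti⟩ := hL.exists_antitoneOn
  have hτpos : ∀ n, 0 < τ n := fun n => (hE (hτ.2.2 n).1).lt_of_ne' (hτ.2.2 n).2
  have hbracket : ∀ n, ∃ k, (L (k + 1)).1 < τ n ∧ (τ n ≤ (L N).1 → τ n ≤ (L k).1) := by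
    intro n
    by_cases hn : τ n ≤ (L N).1
    · obtain ⟨k, -, hlt, hle⟩ :=
        exists_lt_succ_and_le hn (hL.1.2.2.1.eventually (gt_mem_nhds (hτpos n)))
      exact ⟨k, hlt, fun _ => hle⟩
    · have hsucc := hanti self_mem_Ici (mem_Ici.2 N.le_succ) N.le_succ
      exact ⟨N, hsucc.trans_lt (not_le.1 hn), fun h => (hn h).elim⟩
  choose f hfl hfτ using hbracket
  have hf : Tendsto f atTop atTop :=
    tendsto_atTop_of_tendsto_comp_zero (l := fun k => (L (k + 1)).1) (fun k => hL.1.1 _) <|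
      tendsto_of_tendsto_of_tendsto_of_le_of_le tendsto_const_nhds hτ.2.1
        (fun n => (hL.1.1 _).le) (fun n => (hfl n).le)
  have hτl : ∀ᶠ n in atTop, τ n ≤ (L (f n)).1 :=
    (hτ.2.1.eventually (ge_mem_nhds (hL.1.1 N))).mono hfτ
  have hmτ : ∀ n, (L (f n + 1)).2 ≤ τ n :=
    fun n => (hL.1.2.1 _).le_of_mem (hτ.2.2 n).1 (hfl n)
  calc Cseq E τ ≤ limsup (fun n => ENNReal.ofReal ((L (f n)).1 / τ n)) atTop :=
        iInf₂_le (L ∘ f) ⟨hL.1.comp hf, hτl⟩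
    _ ≤ limsup ((fun k => ENNReal.ofReal ((L k).1 / (L (k + 1)).2)) ∘ f) atTop :=
        limsup_le_limsup (Eventually.of_forall fun n => ENNReal.ofReal_le_ofReal <|
          div_le_div_of_nonneg_left (hL.1.1 _).le (hL.1.snd_pos _) (hmτ n))
    _ ≤ Mq L := by
        rw [limsup_comp]
        exact limsup_le_limsup_of_le hf

lemma exists_memE0d_tendsto_div_snd_succ (hL : memIEsd E L) :
    ∃ τ, memE0d E τ ∧ (∀ n, (L (n + 1)).2 ≤ τ n) ∧
      Tendsto (fun n => τ n / (L (n + 1)).2) atTop (𝓝 1) := by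
  set m : ℕ → ℝ := fun n => (L (n + 1)).2
  have hm : ∀ n, 0 < m n := fun n => hL.1.snd_pos _
  have hex : ∀ n : ℕ, ∃ x ∈ E, x ∈ Ico (m n) (m n + m n / (n + 1)) :=
    fun n => (hL.1.2.1 (n + 1)).exists_mem_Ico (div_pos (hm n) n.cast_add_one_pos)
  choose τ hτE hτ using hex
  have hτpos : ∀ n, 0 < τ n := fun n => (hm n).trans_le (hτ n).1
  have hτ2 : ∀ n, τ n ≤ 2 * m n := fun n => by
    have := div_le_self (hm n).le (by simp : (1 : ℝ) ≤ n + 1)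
    linarith [(hτ n).2]
  have hm0 : Tendsto m atTop (𝓝 0) :=
    tendsto_of_tendsto_of_tendsto_of_le_of_le' tendsto_const_nhds hL.1.2.2.1
      (Eventually.of_forall fun n => (hm n).le) hL.eventually_snd_succ_le
  have hτdecr : AlmostDecr τ := by
    have hhalf : ∀ᶠ n in atTop, (L n).1 < (L n).2 / 2 := by
      filter_upwards [hL.1.tendsto_fst_div_snd.eventually (gt_mem_nhds one_half_pos)] with n hn
      rw [div_lt_iff₀ (hL.1.snd_pos n)] at hn
      linarith
    filter_upwards [(tendsto_add_atTop_nat 1).eventually (hL.eventually_snd_succ_le.and hhalf)]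
      with n ⟨hle, hlt⟩
    linarith [hτ2 (n + 1), (hτ n).1]
  refine ⟨τ, ⟨hτdecr, ?_, fun n => ⟨hτE n, (hτpos n).ne'⟩⟩, fun n => (hτ n).1, ?_⟩
  · exact tendsto_of_tendsto_of_tendsto_of_le_of_le tendsto_const_nhds
      (by simpa using hm0.const_mul 2) (fun n => (hτpos n).le) hτ2
  · refine tendsto_of_tendsto_of_tendsto_of_le_of_le tendsto_const_nhds
      (by simpa using tendsto_one_div_add_atTop_nhds_zero_nat.const_add (1 : ℝ))
      (fun n => (one_le_div (hm n)).2 (hτ n).1) (fun n => ?_)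
    rw [div_le_iff₀ (hm n)]
    have hexpand : (1 + ((n : ℝ) + 1)⁻¹) * m n = m n + m n / (n + 1) := by ring
    linarith [(hτ n).2]

lemma Mq_le_limsup_div (hL : memIEsd E L) (hU : Universal E L) {τ : ℕ → ℝ}
    (hmτ : ∀ n, (L (n + 1)).2 ≤ τ n) (hratio : Tendsto (fun n => τ n / (L (n + 1)).2) atTop (𝓝 1))
    {A : ℕ → ℝ × ℝ} (hA : memIE E A) (hτA : ∀ᶠ n in atTop, τ n ≤ (A n).1) :
    Mq L ≤ limsup (fun n => ENNReal.ofReal ((A n).1 / τ n)) atTop := by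
  have hτpos : ∀ n, 0 < τ n := fun n => (hL.1.snd_pos _).trans_le (hmτ n)
  have hlA := hL.eventually_fst_le hU hA (hτA.mono fun n h => (hmτ n).trans h)
  have hratio' : Tendsto (fun n => ENNReal.ofReal (τ n / (L (n + 1)).2)) atTop (𝓝 1) := by
    simpa using ENNReal.tendsto_ofReal hratio
  calc Mq L
      = limsup ((fun n => ENNReal.ofReal ((L n).1 / τ n)) *
          fun n => ENNReal.ofReal (τ n / (L (n + 1)).2)) atTop := by
        refine congrArg (limsup · atTop) (funext fun n => ?_)
        rw [Pi.mul_apply, ← ENNReal.ofReal_mul (div_pos (hL.1.1 n) (hτpos n)).le,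
          div_mul_div_cancel₀ (hτpos n).ne']
    _ ≤ limsup (fun n => ENNReal.ofReal ((L n).1 / τ n)) atTop *
          limsup (fun n => ENNReal.ofReal (τ n / (L (n + 1)).2)) atTop := by
        refine ENNReal.limsup_mul_le' (Or.inr ?_) (Or.inr ?_) <;> simp [hratio'.limsup_eq]
    _ = limsup (fun n => ENNReal.ofReal ((L n).1 / τ n)) atTop := by
        rw [hratio'.limsup_eq, mul_one]
    _ ≤ limsup (fun n => ENNReal.ofReal ((A n).1 / τ n)) atTop :=
        limsup_le_limsup (hlA.mono fun n h =>
          ENNReal.ofReal_le_ofReal (div_le_div_of_nonneg_right h (hτpos n).le))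

lemma Mq_le_CE (hL : memIEsd E L) (hU : Universal E L) : Mq L ≤ CE E := by
  obtain ⟨τ, hτ, hmτ, hratio⟩ := exists_memE0d_tendsto_div_snd_succ hL
  exact le_iSup₂_of_le τ hτ <| le_iInf₂ fun A ⟨hA, hτA⟩ =>
    Mq_le_limsup_div hL hU hmτ hratio hA hτA

end

theorem stmt9_general (E : Set ℝ) (hE : E ⊆ Set.Ici 0) (L : ℕ → ℝ × ℝ)
    (hL : memIEsd E L) (hUniv : Universal E L) :
    Mq L = CE E :=
  le_antisymm (Mq_le_CE hL hUniv) (iSup₂_le fun _ hτ => Cseq_le_Mq hE hL hτ)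

theorem stmt9 (E : Set ℝ) (hE : E ⊆ Set.Ici 0) (hCSP : CSP E) (L : ℕ → ℝ × ℝ)
    (hL : memIEsd E L) (hUniv : Universal E L) :
    Mq L = CE E :=
  stmt9_general E hE L hL hUniv
end
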